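/- arXiv:1207.5542 — 10 statements merged into one kernel-verified Lean document; each statement's English description precedes it below -/
import Mathlib

section
/- Let n > k and d ≤ n-k+1. There exists a binary linear [n,k,d] code if and only if there exists an (n-k)×k binary matrix A = (β₁ᵀ,...,β_kᵀ) with β_i ∈ {0,1}^{n-k} such that for every pair of nonnegative integers d₁, d₂ with d₁ + d₂ = d - 1, after removing any d₂ rows from A, every d₁ columns of the remaining matrix are linearly independent over F₂. -/
/-!
A code of minimum distance `d ≥ 1` has linearly independent generator rows, hence `k` coordinates
(an information set) on which its generator matrix `G` is invertible; multiplying `G` by the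
inverse of that block gives a generator of the same code in systematic form `[I | Aᵀ]`, up to a
permutation of coordinates. The codeword of `x` then has weight `wt x + wt (A x)`. A dependency
among the columns `S` of `A` after deleting the rows `R` is exactly a nonzero `x` supported on `S`
with `A x` supported on `R`, i.e. a codeword of weight at most `|S| + |R| = d - 1`; conversely
the support of `A x` for a light codeword can be padded to `d - 1 - wt x` rows since
`d ≤ n - k + 1`.
-/

open Matrix Finset

section Hamming

variable {ι α β K : Type*} [Fintype ι] [Fintype α] [Fintype β] [Zero K] [DecidableEq K]

lemma hammingNorm_le_card_of_support_subset {x : ι → K} {s : Finset ι}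
    (h : ∀ i ∉ s, x i = 0) : hammingNorm x ≤ #s :=
  card_le_card fun i hi => by_contra fun his => (mem_filter.1 hi).2 (h i his)

lemma hammingNorm_comp_equiv (σ : α ≃ β) (x : β → K) :
    hammingNorm (x ∘ σ) = hammingNorm x := by
  simp only [hammingNorm, card_filter, Function.comp_apply,
    σ.sum_comp fun j => if x j ≠ 0 then 1 else 0]

lemma hammingNorm_sumElim (x : α → K) (y : β → K) :
    hammingNorm (Sum.elim x y) = hammingNorm x + hammingNorm y := by
  simp only [hammingNorm, card_filter, Fintype.sum_sum_type, Sum.elim_inl, Sum.elim_inr]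
  rfl

end Hamming

section ColumnIndependence

variable {ι κ K : Type*} [Fintype κ] [DecidableEq κ] [CommRing K]

lemma linearIndependent_cols_restrict_iff (A : Matrix ι κ K) (R : Finset ι) (S : Finset κ) :
    LinearIndependent K (fun j : S => fun i : {i // i ∉ R} => A i j) ↔
      ∀ x : κ → K, (∀ j ∉ S, x j = 0) → (∀ i ∉ R, (A *ᵥ x) i = 0) → x = 0 := by
  have sum_eq : ∀ x : κ → K, (∀ j ∉ S, x j = 0) →
      ∑ j : S, x j • (fun i : {i // i ∉ R} => A i j) =
        fun i : {i // i ∉ R} => (A *ᵥ x) i := by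
    intro x hx
    ext i
    simp only [Finset.sum_apply, Pi.smul_apply, smul_eq_mul]
    rw [sum_coe_sort S fun j => x j * A i j, mulVec, dotProduct,
      sum_subset (subset_univ S) fun j _ hj => by simp [hx j hj]]
    simp only [mul_comm]
  constructor
  · intro hli x hxS hxR
    have h := Fintype.linearIndependent_iff.1 hli
    ext j
    by_cases hj : j ∈ S
    · refine h (fun j => x j) ?_ ⟨j, hj⟩
      rw [sum_eq x hxS]
      exact funext fun i => hxR i i.2
    · exact hxS j hj
  · intro h
    refine Fintype.linearIndependent_iff.2 fun g hg j => ?_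
    set x : κ → K := fun j => if hj : j ∈ S then g ⟨j, hj⟩ else 0
    have hxS : ∀ j ∉ S, x j = 0 := fun j hj => dif_neg hj
    have hgx : (fun j : S => x j) = g := funext fun j => dif_pos j.2
    have hxR : ∀ i ∉ R, (A *ᵥ x) i = 0 := fun i hi => by
      rw [← hgx, sum_eq x hxS] at hg
      exact congrFun hg ⟨i, hi⟩
    rw [← hgx, h x hxS hxR]
    rfl

lemma forall_linearIndependent_cols_restrict_iff [Fintype ι] [DecidableEq ι] [DecidableEq K]
    (A : Matrix ι κ K) {d : ℕ} (hd : d ≤ Fintype.card ι + 1) :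
    (∀ d₁ d₂ : ℕ, d₁ + d₂ = d - 1 → ∀ R : Finset ι, R.card = d₂ →
        ∀ S : Finset κ, S.card = d₁ →
          LinearIndependent K (fun j : S => fun i : {i // i ∉ R} => A i j)) ↔
      ∀ x : κ → K, x ≠ 0 → d ≤ hammingNorm x + hammingNorm (A *ᵥ x) := by
  simp only [linearIndependent_cols_restrict_iff]
  constructor
  · intro h x hx
    by_contra! hlt
    have hpos := hammingNorm_pos_iff.2 hx
    obtain ⟨R, hTR, -, hR⟩ := exists_subsuperset_card_eq (subset_univ {i | (A *ᵥ x) i ≠ 0})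
      (n := d - 1 - hammingNorm x) (show hammingNorm (A *ᵥ x) ≤ _ by omega)
      (by rw [card_univ]; omega)
    refine hx (h (hammingNorm x) _ (by omega) R hR {j | x j ≠ 0} rfl x
      (fun j hj => ?_) (fun i hi => ?_))
    · simpa using hj
    · by_contra hne
      exact hi (hTR (by simpa using hne))
  · intro h d₁ d₂ hsum R hR S hS x hxS hxR
    by_contra hx
    have := h x hx
    have := hammingNorm_pos_iff.2 hx
    have := hammingNorm_le_card_of_support_subset hxS
    have := hammingNorm_le_card_of_support_subset hxR
    omega

end ColumnIndependence

section Systematic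

variable {κ ι γ K : Type*} [DecidableEq κ] [CommSemiring K]

def systematicGenerator (σ : κ ⊕ ι ≃ γ) (A : Matrix ι κ K) : Matrix κ γ K :=
  (fromCols 1 Aᵀ).submatrix id σ.symm

lemma eq_systematicGenerator_of_submatrix_eq_one (σ : κ ⊕ ι ≃ γ) (G : Matrix κ γ K)
    (hG : G.submatrix id (σ ∘ Sum.inl) = 1) :
    G = systematicGenerator σ (G.submatrix id (σ ∘ Sum.inr))ᵀ := by
  ext i j
  obtain ⟨c | r, rfl⟩ := σ.surjective j
  · simpa [systematicGenerator] using congrFun (congrFun hG i) c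
  · simp [systematicGenerator]

variable [Fintype κ]

lemma vecMul_systematicGenerator_comp (σ : κ ⊕ ι ≃ γ) (A : Matrix ι κ K) (x : κ → K) :
    (x ᵥ* systematicGenerator σ A) ∘ σ = Sum.elim x (A *ᵥ x) := by
  change (x ᵥ* (fromCols 1 Aᵀ).submatrix (Equiv.refl κ) σ.symm) ∘ σ = _
  rw [submatrix_vecMul_equiv]
  ext j
  simp [vecMul_transpose]

lemma hammingNorm_vecMul_systematicGenerator [Fintype ι] [Fintype γ] [DecidableEq K]
    (σ : κ ⊕ ι ≃ γ) (A : Matrix ι κ K) (x : κ → K) :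
    hammingNorm (x ᵥ* systematicGenerator σ A) = hammingNorm x + hammingNorm (A *ᵥ x) := by
  rw [← hammingNorm_comp_equiv σ, vecMul_systematicGenerator_comp, hammingNorm_sumElim]

end Systematic

section InformationSet

variable {κ ι γ K : Type*} [Fintype κ] [Fintype ι] [Fintype γ] [DecidableEq κ] [Field K]

lemma exists_sumEquiv_isUnit_submatrix (G : Matrix κ γ K) (hG : LinearIndependent K G.row)
    (hcard : Fintype.card κ + Fintype.card ι = Fintype.card γ) :
    ∃ σ : κ ⊕ ι ≃ γ, IsUnit (G.submatrix id (σ ∘ Sum.inl)) := by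
  classical
  obtain ⟨b, -, -, hspan, hb⟩ :=
    exists_linearIndepOn_extension (linearIndepOn_empty K G.col) (Set.empty_subset Set.univ)
  have htop : Submodule.span K (G.col '' b) = ⊤ := by
    refine eq_top_mono (Submodule.span_le.2 (by simpa using hspan)) ?_
    refine Submodule.eq_top_of_finrank_eq ?_
    rw [← rank_eq_finrank_span_cols, hG.rank_matrix, Module.finrank_fintype_fun_eq_card]
  have hb_card : Fintype.card b = Fintype.card κ := by
    rw [linearIndependent_iff_card_eq_finrank_span.1 hb, Set.finrank, ← Set.image_eq_range, htop,
      finrank_top, Module.finrank_fintype_fun_eq_card]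
  let e₁ : κ ≃ b := Fintype.equivOfCardEq hb_card.symm
  let e₂ : ι ≃ (bᶜ : Set γ) := Fintype.equivOfCardEq (by rw [Fintype.card_compl_set]; omega)
  refine ⟨(e₁.sumCongr e₂).trans (Equiv.Set.sumCompl b), ?_⟩
  rw [← linearIndependent_cols_iff_isUnit]
  exact hb.comp e₁ e₁.injective

variable [DecidableEq K]

lemma exists_redundancy_of_generator (hcard : Fintype.card κ + Fintype.card ι = Fintype.card γ)
    {d : ℕ} (G : Matrix κ γ K)
    (hG : ∀ x : κ → K, x ≠ 0 → d ≤ hammingNorm (x ᵥ* G)) :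
    ∃ A : Matrix ι κ K, ∀ x : κ → K, x ≠ 0 →
      d ≤ hammingNorm x + hammingNorm (A *ᵥ x) := by
  rcases d.eq_zero_or_pos with rfl | hd
  · exact ⟨0, fun _ _ => Nat.zero_le _⟩
  have hrows : LinearIndependent K G.row := by
    refine vecMul_injective_iff.1 ((injective_iff_map_eq_zero G.vecMulLinear).2 fun x hx => ?_)
    by_contra hx0
    have hdx := hG x hx0
    rw [vecMulLinear_apply] at hx
    rw [hx, hammingNorm_zero] at hdx
    omega
  obtain ⟨σ, hM⟩ := exists_sumEquiv_isUnit_submatrix (ι := ι) G hrows hcard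
  set M := G.submatrix id (σ ∘ Sum.inl)
  have hM' : IsUnit M.det := (isUnit_iff_isUnit_det M).1 hM
  have hsys : (M⁻¹ * G).submatrix id (σ ∘ Sum.inl) = 1 := by
    rw [← nonsing_inv_mul M hM']
    rfl
  refine ⟨((M⁻¹ * G).submatrix id (σ ∘ Sum.inr))ᵀ, fun x hx => ?_⟩
  rw [← hammingNorm_vecMul_systematicGenerator σ,
    ← eq_systematicGenerator_of_submatrix_eq_one σ _ hsys, ← vecMul_vecMul]
  exact hG _ fun h => hx <|
    vecMul_injective_of_isUnit (isUnit_nonsing_inv_iff.2 hM) (by simpa using h)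

lemma exists_generator_iff_exists_redundancy
    (hcard : Fintype.card κ + Fintype.card ι = Fintype.card γ) (d : ℕ) :
    (∃ G : Matrix κ γ K, ∀ x : κ → K, x ≠ 0 → d ≤ hammingNorm (x ᵥ* G)) ↔
      ∃ A : Matrix ι κ K, ∀ x : κ → K, x ≠ 0 →
        d ≤ hammingNorm x + hammingNorm (A *ᵥ x) := by
  refine ⟨fun ⟨G, hG⟩ => exists_redundancy_of_generator hcard G hG, fun ⟨A, hA⟩ => ?_⟩
  let σ : κ ⊕ ι ≃ γ := Fintype.equivOfCardEq (by rw [Fintype.card_sum, hcard])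
  exact ⟨systematicGenerator σ A,
    fun x hx => hammingNorm_vecMul_systematicGenerator σ A x ▸ hA x hx⟩

end InformationSet

/-- For n > k and d ≤ n-k+1: a binary linear [n,k,d] code exists iff there is an
(n-k)×k binary matrix A such that for all d₁+d₂ = d-1, after removing any d₂ rows of A,
every d₁ columns of the remaining matrix are linearly independent over F₂. -/
theorem stmt3 (n k d : ℕ) (hk : k < n) (hd : d ≤ n - k + 1) :
    (∃ G : Matrix (Fin k) (Fin n) (ZMod 2),
        ∀ x : Fin k → ZMod 2, x ≠ 0 → d ≤ hammingNorm (Matrix.vecMul x G)) ↔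
      (∃ A : Matrix (Fin (n - k)) (Fin k) (ZMod 2),
        ∀ d₁ d₂ : ℕ, d₁ + d₂ = d - 1 →
          ∀ R : Finset (Fin (n - k)), R.card = d₂ →
            ∀ S : Finset (Fin k), S.card = d₁ →
              LinearIndependent (ZMod 2)
                (fun j : S => fun i : {i : Fin (n - k) // i ∉ R} => A i.1 j.1)) := by
  have hcard : Fintype.card (Fin k) + Fintype.card (Fin (n - k)) = Fintype.card (Fin n) := by
    simp only [Fintype.card_fin]
    omega
  rw [exists_generator_iff_exists_redundancy hcard]
  exact exists_congr fun A =>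
    (forall_linearIndependent_cols_restrict_iff A (by simpa using hd)).symm
end

section
/- There is no flat [7,3,4] BP-XOR code. That is, there is no 3×7 binary generator matrix G such that (a) the binary linear code generated by G has minimum distance 4, and (b) after the deletion of any 3 columns of G, the remaining matrix admits successful belief-propagation decoding, i.e., one can iteratively recover all 3 message symbols starting from columns of Hamming weight 1 and peeling. -/
/-- The set of symbols recoverable by the belief-propagation (peeling) decoder from a
collection of cells (each cell given by the set of information symbols XORed in it):
a symbol i is recoverable if some cell contains i and all of its other symbols are
recoverable. -/
inductive Recoverable {ι : Type} (cells : Set (Finset ι)) : ι → Prop where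
  | step (s : Finset ι) (hs : s ∈ cells) (i : ι) (hi : i ∈ s)
      (h : ∀ j ∈ s, j ≠ i → Recoverable cells j) : Recoverable cells i

/-- Support of column j of a generator matrix. -/
def colSupp {k n : ℕ} (G : Matrix (Fin k) (Fin n) (ZMod 2)) (j : Fin n) :
    Finset (Fin k) :=
  Finset.univ.filter fun i => G i j ≠ 0

open Finset

lemma no_rec {ι : Type} {cells : Set (Finset ι)} (h : ∀ s ∈ cells, s.card ≠ 1) :
    ∀ i, ¬ Recoverable cells i := by
  intro i hr
  induction hr with
  | step s hs i hi hrec ih =>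
    obtain ⟨j, hj, hji⟩ : ∃ j ∈ s, j ≠ i := by
      by_contra hcon
      push_neg at hcon
      have hsi : s = {i} := by
        apply Finset.eq_singleton_iff_unique_mem.2 ⟨hi, fun x hx => hcon x hx⟩
      exact h s hs (by simp [hsi])
    exact ih j hj hji

lemma zmod2_ne_zero {a : ZMod 2} (h : a ≠ 0) : a = 1 := by
  revert h; revert a; decide

lemma hammingNorm_eq_card {n : ℕ} (y : Fin n → ZMod 2) :
    hammingNorm y = (Finset.univ.filter fun j => y j ≠ 0).card := rfl

/-- There is no flat [7,3,4] BP-XOR code: no 3×7 binary generator matrix of minimum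
distance 4 such that after erasing any 3 columns, all 3 message symbols are recovered
by the peeling decoder. -/
theorem stmt8 :
    ¬ ∃ G : Matrix (Fin 3) (Fin 7) (ZMod 2),
      ((∀ x : Fin 3 → ZMod 2, x ≠ 0 → 4 ≤ hammingNorm (Matrix.vecMul x G)) ∧
        ∃ x : Fin 3 → ZMod 2, x ≠ 0 ∧ hammingNorm (Matrix.vecMul x G) = 4) ∧
      ∀ E : Finset (Fin 7), E.card = 3 →
        ∀ i : Fin 3, Recoverable {s | ∃ j : Fin 7, j ∉ E ∧ s = colSupp G j} i := by
  rintro ⟨G, ⟨hdist, -⟩, hbp⟩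
  classical
  -- the set of singleton columns
  set S : Finset (Fin 7) := Finset.univ.filter (fun j => (colSupp G j).card = 1) with hS
  have hmemS : ∀ j, j ∈ S ↔ (colSupp G j).card = 1 := by
    intro j; simp [hS]
  -- Step A: at least 4 singleton columns
  have hScard : 4 ≤ S.card := by
    by_contra hcon
    push_neg at hcon
    obtain ⟨E, hSE, -, hE⟩ := Finset.exists_subsuperset_card_eq (S.subset_univ)
      (Nat.le_of_lt_succ hcon) (by simp)
    refine no_rec ?_ 0 (hbp E hE 0)
    rintro s ⟨j, hjE, rfl⟩ hcard
    exact hjE (hSE ((hmemS j).2 hcard))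
  -- rows
  set row : Fin 3 → Finset (Fin 7) := fun t => Finset.univ.filter (fun j => G t j ≠ 0) with hrowdef
  have hrow : ∀ t, 4 ≤ (row t).card := by
    intro t
    have hx : (Pi.single t 1 : Fin 3 → ZMod 2) ≠ 0 := by
      intro h
      have := congrFun h t
      simp at this
    have := hdist _ hx
    rwa [Matrix.single_one_vecMul, hammingNorm_eq_card] at this
  -- the fibers
  set A : Fin 3 → Finset (Fin 7) := fun t => Finset.univ.filter (fun j => colSupp G j = {t})
    with hAdef
  have hAsubS : ∀ t, A t ⊆ S := by
    intro t j hj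
    simp only [hAdef, mem_filter, mem_univ, true_and] at hj
    exact (hmemS j).2 (by simp [hj])
  have hsub : ∀ t, row t ⊆ A t ∪ (Finset.univ \ S) := by
    intro t j hj
    simp only [hrowdef, mem_filter, mem_univ, true_and] at hj
    by_cases hjS : j ∈ S
    · obtain ⟨a, ha⟩ := Finset.card_eq_one.1 ((hmemS j).1 hjS)
      have ht : t ∈ colSupp G j := by simp [colSupp, hj]
      rw [ha] at ht
      simp only [Finset.mem_singleton] at ht
      subst ht
      exact Finset.mem_union_left _ (by simp [hAdef, ha])
    · exact Finset.mem_union_right _ (by simp [hjS])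
  have hcompl : (Finset.univ \ S).card = 7 - S.card := by
    rw [Finset.card_sdiff_of_subset (S.subset_univ)]
    simp
  have hbound : ∀ t, 4 ≤ (A t).card + (7 - S.card) := by
    intro t
    calc 4 ≤ (row t).card := hrow t
    _ ≤ (A t ∪ (Finset.univ \ S)).card := Finset.card_le_card (hsub t)
    _ ≤ (A t).card + (Finset.univ \ S).card := Finset.card_union_le _ _
    _ = (A t).card + (7 - S.card) := by rw [hcompl]
  -- S is the disjoint union of the A t
  have hSbU : S = Finset.univ.biUnion A := by
    ext j
    simp only [Finset.mem_biUnion, mem_univ, true_and, hmemS, hAdef, mem_filter]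
    constructor
    · intro h
      obtain ⟨a, ha⟩ := Finset.card_eq_one.1 h
      exact ⟨a, by simp [ha]⟩
    · rintro ⟨t, ht⟩
      simp [ht]
  have hdisj : ∀ t ∈ (Finset.univ : Finset (Fin 3)), ∀ t' ∈ Finset.univ, t ≠ t' →
      Disjoint (A t) (A t') := by
    intro t _ t' _ htt'
    rw [Finset.disjoint_left]
    intro j hj hj'
    simp only [hAdef, mem_filter, mem_univ, true_and] at hj hj'
    rw [hj] at hj'
    exact htt' (Finset.singleton_injective hj')
  have hSsum : S.card = ∑ t, (A t).card := by
    rw [hSbU, Finset.card_biUnion hdisj]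
  have hS7 : S.card ≤ 7 := by
    calc S.card ≤ (Finset.univ : Finset (Fin 7)).card := Finset.card_le_card (S.subset_univ)
    _ = 7 := by simp
  -- numeric extraction
  have hsum3 : S.card = (A 0).card + (A 1).card + (A 2).card := by
    rw [hSsum, Fin.sum_univ_three]
  have hcases : ((A 0).card = 1 ∧ (A 1).card = 1) ∨ ((A 0).card = 1 ∧ (A 2).card = 1)
      ∨ ((A 1).card = 1 ∧ (A 2).card = 1) := by
    have h0 := hbound 0; have h1 := hbound 1; have h2 := hbound 2
    omega
  have hS4 : S.card = 4 := by
    have h0 := hbound 0; have h1 := hbound 1; have h2 := hbound 2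
    omega
  obtain ⟨t1, t2, ht12, hA1, hA2⟩ : ∃ t1 t2 : Fin 3, t1 ≠ t2 ∧ (A t1).card = 1 ∧
      (A t2).card = 1 := by
    rcases hcases with ⟨h, h'⟩ | ⟨h, h'⟩ | ⟨h, h'⟩
    exacts [⟨0, 1, by decide, h, h'⟩, ⟨0, 2, by decide, h, h'⟩, ⟨1, 2, by decide, h, h'⟩]
  -- Step D: rows t1, t2 are nonzero on all non-singleton columns
  have hfull : ∀ t : Fin 3, (A t).card = 1 → ∀ j ∉ S, G t j ≠ 0 := by
    intro t hAt j hjS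
    have hcard : (A t ∪ (Finset.univ \ S)).card ≤ (row t).card := by
      calc (A t ∪ (Finset.univ \ S)).card ≤ (A t).card + (Finset.univ \ S).card :=
        Finset.card_union_le _ _
      _ = 4 := by rw [hAt, hcompl, hS4]
      _ ≤ (row t).card := hrow t
    have heq := Finset.eq_of_subset_of_card_le (hsub t) hcard
    have : j ∈ row t := by
      rw [heq]
      exact Finset.mem_union_right _ (by simp [hjS])
    simpa [hrowdef] using this
  -- Step E: the codeword e_{t1} + e_{t2} has weight 2
  set x : Fin 3 → ZMod 2 := Pi.single t1 1 + Pi.single t2 1 with hxdef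
  have hxne : x ≠ 0 := by
    intro h
    have := congrFun h t1
    simp [hxdef, Pi.single_apply, ht12, Ne.symm ht12] at this
  have hvm : ∀ j, Matrix.vecMul x G j = G t1 j + G t2 j := by
    intro j
    rw [hxdef, Matrix.add_vecMul, Matrix.single_one_vecMul, Matrix.single_one_vecMul]
    rfl
  have hfilt : (Finset.univ.filter fun j => Matrix.vecMul x G j ≠ 0) = A t1 ∪ A t2 := by
    ext j
    simp only [mem_filter, mem_univ, true_and, hvm, Finset.mem_union, hAdef]
    by_cases hjS : j ∈ S
    · obtain ⟨a, ha⟩ := Finset.card_eq_one.1 ((hmemS j).1 hjS)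
      have hgij : ∀ i : Fin 3, G i j ≠ 0 ↔ i = a := by
        intro i
        constructor
        · intro h
          have : i ∈ colSupp G j := by simp [colSupp, h]
          rwa [ha, Finset.mem_singleton] at this
        · intro h
          have : a ∈ colSupp G j := by rw [ha]; simp
          rw [h]
          simpa [colSupp] using this
      by_cases h1 : a = t1
      · subst h1
        have hg1 : G a j = 1 := zmod2_ne_zero ((hgij a).2 rfl)
        have hg2 : G t2 j = 0 := by
          by_contra h
          exact ht12 (((hgij t2).1 h) ▸ rfl)
        simp [hg1, hg2, ha]
      · by_cases h2 : a = t2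
        · subst h2
          have hg2 : G a j = 1 := zmod2_ne_zero ((hgij a).2 rfl)
          have hg1 : G t1 j = 0 := by
            by_contra h
            exact ht12 ((hgij t1).1 h)
          simp [hg1, hg2, ha]
        · have hg1 : G t1 j = 0 := by
            by_contra h
            exact h1 ((hgij t1).1 h).symm
          have hg2 : G t2 j = 0 := by
            by_contra h
            exact h2 ((hgij t2).1 h).symm
          simp only [hg1, hg2, ha, add_zero, ne_eq, not_true_eq_false,
            Finset.singleton_inj]
          constructor
          · intro h; exact h.elim
          · rintro (h | h)
            · exact absurd h h1
            · exact absurd h h2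
    · have hg1 : G t1 j = 1 := zmod2_ne_zero (hfull t1 hA1 j hjS)
      have hg2 : G t2 j = 1 := zmod2_ne_zero (hfull t2 hA2 j hjS)
      have hnA : ∀ t, j ∉ A t := fun t h => hjS (hAsubS t h)
      have h1 := hnA t1; have h2 := hnA t2
      simp only [hAdef, mem_filter, mem_univ, true_and] at h1 h2
      constructor
      · intro h; exact absurd (by rw [hg1, hg2]; decide) h
      · rintro (h | h) <;> simp_all
  have hw := hdist x hxne
  rw [hammingNorm_eq_card, hfilt,
    Finset.card_union_of_disjoint (hdisj t1 (by simp) t2 (by simp) ht12), hA1, hA2] at hw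
  omega
end

section
/- Let n be even and suppose K_n admits a perfect one-factorization F₁,...,F_{n-1}. Then for each t ≤ n-3, the edge-colored graph G on vertex set V = {v₁,...,v_{n-1}} with edge set E = F₁' ∪ ... ∪ F'_{t+2}, where F'_i is F_i with the edge incident to v_n removed and all edges of F'_i colored c_i, is (t+1)-color connected, has n-1 vertices, and has exactly (t+2)(n/2 - 1) edges. -/
/-!
Every one-factor F_i is a perfect matching, so it has n/2 edges, exactly one of them at v_n;
this gives the edge count. For connectivity, t deleted colours leave two surviving colours
c₁ ≠ c₂, and F_{c₁} ∪ F_{c₂} is a connected 2-regular graph, i.e. a Hamiltonian cycle, so it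
stays connected after deleting v_n. Rather than identifying the cycle we argue by parity:
matchings are fixed-point-free involutions p, q, and if the component P of p(v_n) in the graph
minus v_n missed q(v_n), then q would pair up P and p would pair up P minus p(v_n), so #P
would be both even and odd.
-/

open Finset Function Relation

theorem even_card_of_involutive {V : Type*} [Fintype V] [DecidableEq V] {f : V → V}
    (hf : Involutive f) {s : Finset V} (hs : ∀ x ∈ s, f x ∈ s) (hfree : ∀ x ∈ s, f x ≠ x) :
    Even #s := by
  let g : V → V := fun x => if x ∈ s then f x else x
  have hg : Involutive g := fun x => by
    by_cases hx : x ∈ s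
    · simp [g, hx, hs x hx, hf x]
    · simp [g, hx]
  have hsupport : (hg.toPerm g).support = s := by
    ext x
    by_cases hx : x ∈ s
    · simp [g, hx, hfree x hx]
    · simp [g, hx]
  rw [← hsupport, even_iff_two_dvd]
  exact Equiv.Perm.two_dvd_card_support (by ext x; simp [sq, hg x])

section PerfectMatching

variable {V : Type*} {M : Finset (Sym2 V)}

theorem exists_partner (hmatch : ∀ v, ∃! e, e ∈ M ∧ v ∈ e) :
    ∃ p : V → V, ∀ v u, s(v, u) ∈ M ↔ u = p v := by
  choose e he hve using fun v => (hmatch v).exists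
  refine ⟨fun v => Sym2.Mem.other (hve v), fun v u => ⟨fun hvu => ?_, ?_⟩⟩
  · have : s(v, u) = e v := (hmatch v).unique ⟨hvu, Sym2.mem_mk_left v u⟩ ⟨he v, hve v⟩
    exact Sym2.congr_right.1 (this.trans (Sym2.other_spec (hve v)).symm)
  · rintro rfl
    rw [Sym2.other_spec]
    exact he v

variable {p : V → V}

theorem involutive_of_mem_iff (hp : ∀ v u, s(v, u) ∈ M ↔ u = p v) : Involutive p :=
  fun v => ((hp _ _).1 (Sym2.eq_swap ▸ (hp v _).2 rfl)).symm

theorem apply_ne_self_of_mem_iff (hloop : ∀ e ∈ M, ¬ e.IsDiag)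
    (hp : ∀ v u, s(v, u) ∈ M ↔ u = p v) (v : V) : p v ≠ v :=
  fun h => hloop _ ((hp v v).2 h.symm) (Sym2.mk_isDiag_iff.2 rfl)

variable [Fintype V] [DecidableEq V]

theorem two_mul_card_eq_card (hloop : ∀ e ∈ M, ¬ e.IsDiag)
    (hmatch : ∀ v, ∃! e, e ∈ M ∧ v ∈ e) : 2 * #M = Fintype.card V := by
  have hcover : M.biUnion Sym2.toFinset = univ := eq_univ_of_forall fun v => by
    obtain ⟨e, ⟨he, hv⟩, -⟩ := hmatch v
    exact mem_biUnion.2 ⟨e, he, Sym2.mem_toFinset.2 hv⟩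
  have hdisj : (M : Set (Sym2 V)).PairwiseDisjoint Sym2.toFinset :=
    fun e he e' he' hne => disjoint_left.2 fun v hv hv' => hne <|
      (hmatch v).unique ⟨he, Sym2.mem_toFinset.1 hv⟩ ⟨he', Sym2.mem_toFinset.1 hv'⟩
  rw [← card_univ, ← hcover, card_biUnion hdisj,
    sum_congr rfl fun e he => Sym2.card_toFinset_of_not_isDiag e (hloop e he), sum_const,
    smul_eq_mul, mul_comm]

theorem card_filter_notMem (hloop : ∀ e ∈ M, ¬ e.IsDiag)
    (hmatch : ∀ v, ∃! e, e ∈ M ∧ v ∈ e) (w : V) :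
    #(M.filter (w ∉ ·)) = Fintype.card V / 2 - 1 := by
  have hw : #(M.filter (w ∈ ·)) = 1 := by
    obtain ⟨e, he, huniq⟩ := hmatch w
    exact card_eq_one.2 ⟨e, eq_singleton_iff_unique_mem.2
      ⟨mem_filter.2 he, fun e' he' => huniq e' (mem_filter.1 he')⟩⟩
  have := card_filter_add_card_filter_not (s := M) (w ∈ ·)
  have := two_mul_card_eq_card hloop hmatch
  omega

end PerfectMatching

section TwoInvolutions

variable {V : Type*} [Fintype V] [DecidableEq V] {p q : V → V} {w : V}

theorem apply_mem_of_apply_mem_of_closed (hp : Involutive p) (hq : Involutive q)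
    (hp' : ∀ x, p x ≠ x) (hq' : ∀ x, q x ≠ x) {P : Finset V} (hw : w ∉ P)
    (hclosed : ∀ x ∈ P, ∀ y, (y = p x ∨ y = q x) → y ≠ w → y ∈ P) (hpw : p w ∈ P) :
    q w ∈ P := by
  by_contra hqw
  have hP : Even #P := even_card_of_involutive hq
    (fun x hx => hclosed x hx _ (Or.inr rfl) fun h => hqw (by rwa [← h, hq x]))
    fun x _ => hq' x
  have hP' : Even #(P.erase (p w)) := by
    refine even_card_of_involutive hp (fun x hx => ?_) fun x _ => hp' x
    obtain ⟨hxw, hx⟩ := mem_erase.1 hx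
    have hpx : p x ≠ w := fun h => hxw (h ▸ (hp x).symm)
    exact mem_erase.2 ⟨fun h => hw (hp.injective h ▸ hx), hclosed x hx _ (Or.inl rfl) hpx⟩
  rw [card_erase_of_mem hpw] at hP'
  have : 0 < #P := card_pos.2 ⟨_, hpw⟩
  obtain ⟨k, hk⟩ := hP
  obtain ⟨l, hl⟩ := hP'
  omega

theorem reflTransGen_deleteVertex (hp : Involutive p) (hq : Involutive q)
    (hp' : ∀ x, p x ≠ x) (hq' : ∀ x, q x ≠ x)
    (hconn : ∀ y, ReflTransGen (fun x y => y = p x ∨ y = q x) w y) {a b : V}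
    (ha : a ≠ w) (hb : b ≠ w) :
    ReflTransGen (fun x y => (y = p x ∨ y = q x) ∧ x ≠ w ∧ y ≠ w) a b := by
  classical
  set G := fun x y => (y = p x ∨ y = q x) ∧ x ≠ w ∧ y ≠ w
  have hsymm : Std.Symm G := ⟨by
    rintro x y ⟨hxy | hxy, hx, hy⟩ <;> subst hxy
    exacts [⟨Or.inl (hp x).symm, hy, hx⟩, ⟨Or.inr (hq x).symm, hy, hx⟩]⟩
  set P := univ.filter fun x => x ≠ w ∧ ReflTransGen G (p w) x
  have hclosed : ∀ x ∈ P, ∀ y, (y = p x ∨ y = q x) → y ≠ w → y ∈ P := by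
    intro x hx y hxy hy
    obtain ⟨hxw, hreach⟩ := (mem_filter.1 hx).2
    exact mem_filter.2 ⟨mem_univ y, hy, hreach.tail ⟨hxy, hxw, hy⟩⟩
  have hpw : p w ∈ P := mem_filter.2 ⟨mem_univ _, hp' w, ReflTransGen.refl⟩
  have hqw : q w ∈ P := apply_mem_of_apply_mem_of_closed hp hq hp' hq' (by simp [P]) hclosed hpw
  have hmem : ∀ y, y ≠ w → y ∈ P := by
    intro y hy
    induction hconn y with
    | refl => exact absurd rfl hy
    | @tail x z _ hxz ih =>
      by_cases hx : x = w
      · subst hx; rcases hxz with rfl | rfl; exacts [hpw, hqw]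
      · exact hclosed x (ih hx) z hxz hy
  have reach : ∀ y, y ≠ w → ReflTransGen G (p w) y :=
    fun y hy => (mem_filter.1 (hmem y hy)).2.2
  exact (Std.Symm.symm _ _ (reach a ha)).trans (reach b hb)

end TwoInvolutions

theorem Finset.natCard_subtype_prod_eq_sum_card {ι α : Type*} (s : Finset ι)
    (G : ι → Finset α) :
    Nat.card {q : ι × α // q.1 ∈ s ∧ q.2 ∈ G q.1} = ∑ i ∈ s, #(G i) := by
  rw [← card_sigma, ← Nat.card_eq_finsetCard]
  exact Nat.card_congr
    { toFun := fun q => ⟨⟨q.1.1, q.1.2⟩, mem_sigma.2 q.2⟩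
      invFun := fun q => ⟨(q.1.1, q.1.2), mem_sigma.1 q.2⟩ }

/-- From a perfect one-factorization F₁,…,F_{n-1} of K_n (n even): each F_i is a
perfect matching, the F_i partition the edges, and the union of any two distinct
one-factors is a Hamiltonian circuit (formalized by: that union is connected, which
for a union of two perfect matchings is equivalent to being a Hamiltonian cycle).
Then for t ≤ n-3, the edge-colored graph on the n-1 vertices ≠ v_n whose edges are
those of F₁,…,F_{t+2} not incident to v_n (edges of F_i colored by i) has exactly
(t+2)(n/2-1) edges and is (t+1)-color connected. -/
theorem stmt9 (n t : ℕ) (ht : t + 3 ≤ n)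
    (F : Fin (n - 1) → Finset (Sym2 (Fin n)))
    (hloop : ∀ i, ∀ e ∈ F i, ¬ e.IsDiag)
    (hmatch : ∀ i, ∀ v : Fin n, ∃! e, e ∈ F i ∧ v ∈ e)
    (hperfect : ∀ i j : Fin (n - 1), i ≠ j → ∀ a b : Fin n,
        Relation.ReflTransGen (fun x y => s(x, y) ∈ F i ∨ s(x, y) ∈ F j) a b) :
    Nat.card {q : Fin (n - 1) × Sym2 (Fin n) //
        (q.1 : ℕ) < t + 2 ∧ q.2 ∈ F q.1 ∧ (⟨n - 1, by omega⟩ : Fin n) ∉ q.2}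
      = (t + 2) * (n / 2 - 1) ∧
    ∀ D : Finset (Fin (n - 1)), D.card = t →
      ∀ a b : Fin n, a ≠ (⟨n - 1, by omega⟩ : Fin n) → b ≠ (⟨n - 1, by omega⟩ : Fin n) →
        Relation.ReflTransGen
          (fun x y => ∃ c : Fin (n - 1), ∃ e ∈ F c, (c : ℕ) < t + 2 ∧ c ∉ D ∧
            (⟨n - 1, by omega⟩ : Fin n) ∉ e ∧ e = s(x, y)) a b := by
  set w : Fin n := ⟨n - 1, by omega⟩
  set S : Finset (Fin (n - 1)) := univ.filter fun i => (i : ℕ) < t + 2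
  have hS : #S = t + 2 := by rw [Fin.card_filter_val_lt]; omega
  refine ⟨?_, fun D hD a b ha hb => ?_⟩
  · calc _ = ∑ i ∈ S, #((F i).filter (w ∉ ·)) :=
          (Nat.card_congr (Equiv.subtypeEquivRight fun q => by simp [S])).trans
            (natCard_subtype_prod_eq_sum_card S fun i => (F i).filter (w ∉ ·))
      _ = ∑ i ∈ S, (n / 2 - 1) := by
          simp only [card_filter_notMem (hloop _) (hmatch _) w, Fintype.card_fin]
      _ = (t + 2) * (n / 2 - 1) := by rw [sum_const, hS, smul_eq_mul]
  · obtain ⟨c₁, hc₁, c₂, hc₂, hne⟩ : ∃ c₁ ∈ S \ D, ∃ c₂ ∈ S \ D, c₁ ≠ c₂ :=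
      one_lt_card.1 (by have := le_card_sdiff D S; omega)
    choose p hp using fun c => exists_partner (hmatch c)
    have hinv c := involutive_of_mem_iff (hp c)
    have hfree c := apply_ne_self_of_mem_iff (hloop c) (hp c)
    have hconn y : ReflTransGen (fun x y => y = p c₁ x ∨ y = p c₂ x) w y :=
      ReflTransGen.mono (fun x y => Or.imp (hp c₁ x y).1 (hp c₂ x y).1) _ _
        (hperfect c₁ c₂ hne w y)
    refine ReflTransGen.mono ?_ _ _
      (reflTransGen_deleteVertex (hinv c₁) (hinv c₂) (hfree c₁) (hfree c₂) hconn ha hb)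
    rintro x y ⟨hxy, hx, hy⟩
    obtain ⟨c, hc, hxy⟩ : ∃ c ∈ S \ D, y = p c x := hxy.elim (⟨c₁, hc₁, ·⟩) (⟨c₂, hc₂, ·⟩)
    obtain ⟨hcS, hcD⟩ := mem_sdiff.1 hc
    refine ⟨c, s(x, y), (hp c x y).2 hxy, (mem_filter.1 hcS).2, hcD, ?_, rfl⟩
    simp [Sym2.mem_iff, hx.symm, hy.symm]
end

section
/- Let 𝒞 be an m×n array BP-XOR code over k information symbols v₁,...,v_k that is t-erasure tolerating and uses only degree one and degree two encoding symbols (each cell is a single v_i or the XOR of two distinct v_i). Then there exists a (t+1)-color connected edge-colored graph G(V,E,C,f) with |V| = k+1, |E| = mn, and |C| = n, where: V = {v₁,...,v_k,v_{k+1}}; each degree-two cell v_{i'} ⊕ v_{j'} in column j gives an edge ⟨v_{i'},v_{j'}⟩ colored c_j; each degree-one cell v_{i'} in column j gives an edge ⟨v_{k+1},v_{i'}⟩ colored c_j. -/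
/-!
Peeling a symbol `a` from a cell means that every other symbol of the cell is
already known, so by induction on the peeling derivation every recoverable symbol is joined to
`v_{k+1}` by a path of edges from the surviving columns: a degree-one cell is itself an edge to
`v_{k+1}`, and a degree-two cell `{a, b}` is an edge to the already connected vertex `b`.
Erasure tolerance makes every symbol recoverable once any `t` columns are deleted, so all
vertices are connected to `v_{k+1}`, hence to each other.
-/

theorem Finset.eq_singleton_or_eq_pair_of_card_le_two {α : Type*} [DecidableEq α]
    {s : Finset α} {i : α} (hi : i ∈ s) (hs : s.card ≤ 2) :
    s = {i} ∨ ∃ b, b ≠ i ∧ s = {i, b} := by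
  by_cases h : ∃ b ∈ s, b ≠ i
  · obtain ⟨b, hb, hbi⟩ := h
    refine Or.inr ⟨b, hbi, (Finset.eq_of_subset_of_card_le ?_ ?_).symm⟩
    · simp [Finset.insert_subset_iff, hi, hb]
    · rwa [Finset.card_pair hbi.symm]
  · push Not at h
    exact Or.inl (Finset.eq_singleton_iff_unique_mem.2 ⟨hi, h⟩)

section CellEdge

variable {ι V : Type*} [LinearOrder ι] (root : V) (f : ι → V)

/-- The edge of a cell of degree one or two, `root` being the extra vertex `v_{k+1}`;
the value on other cells is never used. -/
def cellEdge (s : Finset ι) : Sym2 V :=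
  if h : s.Nonempty then
    if s.min' h = s.max' h then s(root, f (s.min' h)) else s(f (s.min' h), f (s.max' h))
  else s(root, root)

theorem cellEdge_singleton (a : ι) : cellEdge root f {a} = s(root, f a) := by
  simp [cellEdge]

theorem cellEdge_pair {a b : ι} (hab : a ≠ b) : cellEdge root f {a, b} = s(f a, f b) := by
  rcases hab.lt_or_gt with h | h <;> simp [cellEdge, h.le, h.ne]

end CellEdge

theorem Recoverable.reflTransGen_cellEdge {ι : Type} {V : Type*} [LinearOrder ι]
    {root : V} {f : ι → V} {S : Set (Finset ι)} (hdeg : ∀ s ∈ S, s.card ≤ 2) {a : ι} (ha : Recoverable S a) :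
    Relation.ReflTransGen (fun u v => ∃ s ∈ S, cellEdge root f s = s(u, v)) (f a) root := by
  induction ha with
  | step s hs i hi _ ih =>
    rcases Finset.eq_singleton_or_eq_pair_of_card_le_two hi (hdeg s hs) with rfl | ⟨b, hbi, rfl⟩
    · exact .single ⟨{i}, hs, by rw [cellEdge_singleton, Sym2.eq_swap]⟩
    · have hb : b ∈ ({i, b} : Finset ι) := by simp
      exact .head ⟨{i, b}, hs, cellEdge_pair root f hbi.symm⟩ (ih b hb hbi)

theorem stmt10_general (m n t k : ℕ)
    (cells : Fin m → Fin n → Finset (Fin k))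
    (hdeg : ∀ i j, (cells i j).card ≤ 2)
    (htol : ∀ E : Finset (Fin n), E.card = t →
      ∀ a : Fin k, Recoverable {s | ∃ i : Fin m, ∃ j : Fin n, j ∉ E ∧ s = cells i j} a) :
    ∃ ends : Fin m × Fin n → Sym2 (Fin (k + 1)),
      (∀ p : Fin m × Fin n, ∀ a b : Fin k, a ≠ b → cells p.1 p.2 = {a, b} →
        ends p = s(a.castSucc, b.castSucc)) ∧
      (∀ p : Fin m × Fin n, ∀ a : Fin k, cells p.1 p.2 = {a} →
        ends p = s(Fin.last k, a.castSucc)) ∧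
      (∀ D : Finset (Fin n), D.card = t →
        ∀ x y : Fin (k + 1),
          Relation.ReflTransGen
            (fun u v => ∃ p : Fin m × Fin n, p.2 ∉ D ∧ ends p = s(u, v)) x y) := by
  refine ⟨fun p => cellEdge (Fin.last k) Fin.castSucc (cells p.1 p.2),
    fun p a b hab h => by dsimp only; rw [h, cellEdge_pair _ _ hab],
    fun p a h => by dsimp only; rw [h, cellEdge_singleton], fun D hD => ?_⟩
  set r := fun u v => ∃ p : Fin m × Fin n, p.2 ∉ D ∧
    cellEdge (Fin.last k) Fin.castSucc (cells p.1 p.2) = s(u, v)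
  have : Std.Symm r := ⟨fun u v ⟨p, hp, he⟩ => ⟨p, hp, he.trans Sym2.eq_swap⟩⟩
  have reach_root (z : Fin (k + 1)) : Relation.ReflTransGen r z (Fin.last k) := by
    rcases Fin.eq_castSucc_or_eq_last z with ⟨a, rfl⟩ | rfl
    · refine Relation.ReflTransGen.mono ?_ _ _ ((htol D hD a).reflTransGen_cellEdge ?_)
      · rintro u v ⟨_, ⟨i, j, hj, rfl⟩, he⟩
        exact ⟨(i, j), hj, he⟩
      · rintro _ ⟨i, j, -, rfl⟩
        exact hdeg i j
    · exact .refl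
  exact fun x y => (reach_root x).trans (Std.Symm.symm _ _ (reach_root y))

/-- From an m×n t-erasure tolerating array BP-XOR code on k information symbols using
only degree one and two encoding symbols (cells given by their supports), one obtains a
(t+1)-color connected edge-colored graph on the k+1 vertices Fin (k+1) (vertex
`Fin.last k` playing the role of v_{k+1}), with mn edges indexed by the cells, colored
by their column: a degree-two cell {a,b} in column j gives edge ⟨a,b⟩ of color j, a
degree-one cell {a} in column j gives edge ⟨v_{k+1},a⟩ of color j. -/
theorem stmt10 (m n t k : ℕ)
    (cells : Fin m → Fin n → Finset (Fin k))
    (hne : ∀ i j, (cells i j).Nonempty)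
    (hdeg : ∀ i j, (cells i j).card ≤ 2)
    (htol : ∀ E : Finset (Fin n), E.card = t →
      ∀ a : Fin k, Recoverable {s | ∃ i : Fin m, ∃ j : Fin n, j ∉ E ∧ s = cells i j} a) :
    ∃ ends : Fin m × Fin n → Sym2 (Fin (k + 1)),
      (∀ p : Fin m × Fin n, ∀ a b : Fin k, a ≠ b → cells p.1 p.2 = {a, b} →
        ends p = s(a.castSucc, b.castSucc)) ∧
      (∀ p : Fin m × Fin n, ∀ a : Fin k, cells p.1 p.2 = {a} →
        ends p = s(Fin.last k, a.castSucc)) ∧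
      (∀ D : Finset (Fin n), D.card = t →
        ∀ x y : Fin (k + 1),
          Relation.ReflTransGen
            (fun u v => ∃ p : Fin m × Fin n, p.2 ∉ D ∧ ends p = s(u, v)) x y) :=
  stmt10_general m n t k cells hdeg htol
end

section
/- Let G(V,E,C,f) be a (t+1)-color connected edge-colored graph with V = {v₁,...,v_k,v_{k+1}}, color set C = {c₁,...,c_n}, and let m = max over colors c of the number of edges colored c. Construct the m×n array whose column j contains, for each edge ⟨v_i,v_{i'}⟩ of color c_j, the encoding symbol v_i ⊕ v_{i'}, with occurrences of v_{k+1} replaced by 0 (i.e., v_{k+1} ⊕ v is replaced by v). Then this array is a t-erasure tolerating array BP-XOR code for the k information symbols v₁,...,v_k: for every set of t colors, BP decoding recovers every v_i from the columns of the remaining n-t colors. Moreover, each v_{i₀} is recovered as the XOR telescoping along any path from v_{k+1} to v_{i₀} avoiding the t erased colors. -/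
theorem List.sum_map_zip_tail_sub {α G : Type*} [AddCommGroup G] (f : α → G) :
    ∀ (L : List α) (h : L ≠ []),
      ((L.zip L.tail).map fun q => f q.2 - f q.1).sum = f (L.getLast h) - f (L.head h)
  | [_], _ => by simp
  | x :: y :: L, _ => by
    have ih := List.sum_map_zip_tail_sub f (y :: L) (List.cons_ne_nil y L)
    simp only [List.tail_cons, List.zip_cons_cons, List.map_cons, List.sum_cons] at ih ⊢
    rw [ih, List.getLast_cons (List.cons_ne_nil y L), List.head_cons, List.head_cons]
    abel

theorem recoverable_of_reflTransGen_last {k : ℕ} {ι : Type} (ends : ι → Sym2 (Fin (k + 1)))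
    (keep : ι → Prop) {x : Fin (k + 1)}
    (hpath : Relation.ReflTransGen (fun u v => ∃ e, keep e ∧ ends e = s(u, v)) (Fin.last k) x)
    (a : Fin k) (hx : x = a.castSucc) :
    Recoverable {s : Finset (Fin k) | ∃ e, keep e ∧
      s = Finset.univ.filter fun i : Fin k => i.castSucc ∈ ends e} a := by
  induction hpath generalizing a with
  | refl => exact absurd hx.symm (Fin.castSucc_lt_last a).ne
  | tail _ hedge ih =>
    obtain ⟨e, he, hends⟩ := hedge
    refine .step _ (Set.mem_ofPred.mpr ⟨e, he, rfl⟩) a ?_ fun j hj hja => ?_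
    · simp only [Finset.mem_filter, Finset.mem_univ, true_and, hends, ← hx, Sym2.mem_mk_right]
    · simp only [Finset.mem_filter, Finset.mem_univ, true_and, hends, Sym2.mem_iff] at hj
      rcases hj with hj | hj
      · exact ih j hj.symm
      · exact absurd (Fin.castSucc_injective _ (hj.trans hx)) hja

theorem stmt11_general (k n t l : ℕ) {ι : Type}
    (ends : ι → Sym2 (Fin (k + 1))) (col : ι → Fin n)
    (hconn : ∀ D : Finset (Fin n), D.card = t →
      ∀ x y : Fin (k + 1),
        Relation.ReflTransGen (fun u v => ∃ e : ι, col e ∉ D ∧ ends e = s(u, v)) x y) :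
    ∀ D : Finset (Fin n), D.card = t →
      (∀ a : Fin k,
        Recoverable {s : Finset (Fin k) | ∃ e : ι, col e ∉ D ∧
          s = Finset.univ.filter fun i : Fin k => i.castSucc ∈ ends e} a) ∧
      (∀ a : Fin k, ∃ L : List (Fin (k + 1)),
        L ≠ [] ∧ L.head? = some (Fin.last k) ∧ L.getLast? = some a.castSucc ∧
        L.Chain' (fun u v => ∃ e : ι, col e ∉ D ∧ ends e = s(u, v)) ∧
        ∀ σ : Fin (k + 1) → (Fin l → ZMod 2), σ (Fin.last k) = 0 →
          σ a.castSucc = ((L.zip L.tail).map fun q => σ q.1 + σ q.2).sum) := by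
  intro D hD
  refine ⟨fun a => recoverable_of_reflTransGen_last ends _ (hconn D hD _ _) a rfl, fun a => ?_⟩
  obtain ⟨L, hchain, hlast⟩ :=
    List.exists_isChain_cons_of_relationReflTransGen (hconn D hD (Fin.last k) a.castSucc)
  refine ⟨Fin.last k :: L, List.cons_ne_nil _ _, rfl, ?_, hchain, fun σ hσ => ?_⟩
  · rw [List.getLast?_eq_some_getLast (List.cons_ne_nil _ _), hlast]
  · have hxor : (fun q : Fin (k + 1) × Fin (k + 1) => σ q.1 + σ q.2) = fun q => σ q.2 - σ q.1 :=
      funext fun q => by rw [ZModModule.sub_eq_add, add_comm]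
    rw [hxor, List.sum_map_zip_tail_sub σ _ (List.cons_ne_nil _ _), hlast, List.head_cons, hσ,
      sub_zero]

/-- From a (t+1)-color connected edge-colored graph on vertices Fin (k+1) (vertex
`Fin.last k` = v_{k+1}, treated as the zero symbol), edges ι colored by Fin n, the
derived array of encoding symbols (each edge ⟨v_i,v_j⟩ of color c contributes the cell
v_i ⊕ v_j in column c, with v_{k+1} replaced by 0) is a t-erasure tolerating array
BP-XOR code: for every set D of t erased colors, every information symbol is
BP-recoverable from the cells of the remaining colors; moreover every v_a is recovered
by XOR-telescoping along a path from v_{k+1} to v_a avoiding the colors of D. -/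
theorem stmt11 (k n t l : ℕ) {ι : Type}
    (ends : ι → Sym2 (Fin (k + 1))) (col : ι → Fin n)
    (hloop : ∀ e : ι, ¬ (ends e).IsDiag)
    (hconn : ∀ D : Finset (Fin n), D.card = t →
      ∀ x y : Fin (k + 1),
        Relation.ReflTransGen (fun u v => ∃ e : ι, col e ∉ D ∧ ends e = s(u, v)) x y) :
    ∀ D : Finset (Fin n), D.card = t →
      (∀ a : Fin k,
        Recoverable {s : Finset (Fin k) | ∃ e : ι, col e ∉ D ∧
          s = Finset.univ.filter fun i : Fin k => i.castSucc ∈ ends e} a) ∧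
      (∀ a : Fin k, ∃ L : List (Fin (k + 1)),
        L ≠ [] ∧ L.head? = some (Fin.last k) ∧ L.getLast? = some a.castSucc ∧
        L.Chain' (fun u v => ∃ e : ι, col e ∉ D ∧ ends e = s(u, v)) ∧
        ∀ σ : Fin (k + 1) → (Fin l → ZMod 2), σ (Fin.last k) = 0 →
          σ a.castSucc = ((L.zip L.tail).map fun q => σ q.1 + σ q.2).sum) :=
  stmt11_general k n t l ends col hconn
end

section
/- Let 𝒞 = [a_{i,j}] be an m×n array BP-XOR code that is t-erasure tolerating, has exactly k = (n-t)m information symbols, and uses only degree one and degree two encoding symbols. Let n₀ = n - t and assume n₀ > 2. Then n ≤ ((n₀-1)/(n₀-2)) · (n₀ - 2/((n₀-2)m + 1)). -/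
lemma noRecover {ι : Type} (cs : Set (Finset ι)) (h2 : ∀ s ∈ cs, 2 ≤ s.card) (a : ι) :
    ¬ Recoverable cs a := by
  intro h
  induction h with
  | step s hs i hi h ih =>
    obtain ⟨b, hb, hbne⟩ := Finset.exists_mem_ne (lt_of_lt_of_le one_lt_two (h2 s hs)) i
    exact ih b hb hbne

/-- Counting bound: a t-erasure tolerating m×n array BP-XOR code with exactly
k = (n-t)m information symbols using only degree one and two encoding symbols, where
n₀ = n - t > 2, satisfies n ≤ ((n₀-1)/(n₀-2))·(n₀ - 2/((n₀-2)m+1)). -/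
theorem stmt12 (m n t n₀ k : ℕ) (hm : 1 ≤ m) (hn₀ : 2 < n₀)
    (hnt : n₀ + t = n) (hk : k = n₀ * m)
    (cells : Fin m → Fin n → Finset (Fin k))
    (hne : ∀ i j, (cells i j).Nonempty)
    (hdeg : ∀ i j, (cells i j).card ≤ 2)
    (htol : ∀ E : Finset (Fin n), E.card = t →
      ∀ a : Fin k, Recoverable {s | ∃ i : Fin m, ∃ j : Fin n, j ∉ E ∧ s = cells i j} a) :
    (n : ℚ) ≤ ((n₀ : ℚ) - 1) / ((n₀ : ℚ) - 2) *
      ((n₀ : ℚ) - 2 / (((n₀ : ℚ) - 2) * (m : ℚ) + 1)) := by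
  have htn : t ≤ n := by omega
  have hk0 : 0 < k := by subst hk; positivity
  -- Lemma A: each symbol appears in at least t+1 columns
  have hA : ∀ a : Fin k,
      t + 1 ≤ (Finset.univ.filter fun j : Fin n => ∃ i, a ∈ cells i j).card := by
    intro a
    by_contra hcon
    push_neg at hcon
    have hle : (Finset.univ.filter fun j : Fin n => ∃ i, a ∈ cells i j).card ≤ t := by omega
    obtain ⟨E, hCE, hE⟩ := Finset.exists_superset_card_eq hle
      (by simpa using htn)
    have hrec := htol E hE a
    cases hrec with
    | step s hs i hi h =>
      obtain ⟨i', j, hjE, hs'⟩ := hs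
      subst hs'
      exact hjE (hCE (Finset.mem_filter.2 ⟨Finset.mem_univ _, ⟨i', hi⟩⟩))
  -- Lemma C: at least t+1 columns contain a degree-one cell
  set D : Finset (Fin n) := Finset.univ.filter fun j : Fin n => ∃ i, (cells i j).card = 1 with hD
  have hC : t + 1 ≤ D.card := by
    by_contra hcon
    push_neg at hcon
    have hle : D.card ≤ t := by omega
    obtain ⟨E, hCE, hE⟩ := Finset.exists_superset_card_eq hle (by simpa using htn)
    have hrec := htol E hE ⟨0, hk0⟩
    refine noRecover _ ?_ _ hrec
    rintro s ⟨i, j, hjE, rfl⟩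
    have h1 : 1 ≤ (cells i j).card := Finset.card_pos.2 (hne i j)
    have hne1 : (cells i j).card ≠ 1 := by
      intro h1'
      exact hjE (hCE (Finset.mem_filter.2 ⟨Finset.mem_univ _, ⟨i, h1'⟩⟩))
    omega
  -- total occurrences
  set S : ℕ := ∑ j : Fin n, ∑ i : Fin m, (cells i j).card with hS
  -- lower bound
  have hlow : k * (t + 1) ≤ S := by
    have e1 : S = ∑ a : Fin k,
        (Finset.univ.filter fun p : Fin m × Fin n => a ∈ cells p.1 p.2).card := by
      have hc : ∀ j : Fin n, ∀ i : Fin m, (cells i j).card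
          = ∑ a : Fin k, if a ∈ cells i j then 1 else 0 := by
        intro j i
        rw [← Finset.card_filter]
        congr 1
        simp [Finset.filter_mem_eq_inter]
      have hc2 : ∀ a : Fin k, (Finset.univ.filter
            fun p : Fin m × Fin n => a ∈ cells p.1 p.2).card
          = ∑ i : Fin m, ∑ j : Fin n, if a ∈ cells i j then 1 else 0 := by
        intro a
        rw [Finset.card_filter, Fintype.sum_prod_type]
      simp_rw [hS, hc, hc2]
      calc (∑ j : Fin n, ∑ i : Fin m, ∑ a : Fin k, if a ∈ cells i j then 1 else 0)
          = ∑ j : Fin n, ∑ a : Fin k, ∑ i : Fin m, if a ∈ cells i j then 1 else 0 :=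
            Finset.sum_congr rfl fun j _ => Finset.sum_comm
        _ = ∑ a : Fin k, ∑ j : Fin n, ∑ i : Fin m, if a ∈ cells i j then 1 else 0 :=
            Finset.sum_comm
        _ = ∑ a : Fin k, ∑ i : Fin m, ∑ j : Fin n, if a ∈ cells i j then 1 else 0 :=
            Finset.sum_congr rfl fun a _ => Finset.sum_comm
    rw [e1]
    calc k * (t + 1) = ∑ _a : Fin k, (t + 1) := by simp [mul_comm]
    _ ≤ _ := by
      refine Finset.sum_le_sum fun a _ => ?_
      refine le_trans (hA a) ?_
      refine le_trans ?_ (Finset.card_image_le (f := Prod.snd))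
      apply Finset.card_le_card
      intro j hj
      obtain ⟨-, i, hi⟩ := Finset.mem_filter.1 hj
      exact Finset.mem_image.2 ⟨(i, j), Finset.mem_filter.2 ⟨Finset.mem_univ _, hi⟩, rfl⟩
  -- upper bound
  have hup : S + (t + 1) ≤ 2 * m * n := by
    have hcol : ∀ j : Fin n,
        (∑ i, (cells i j).card) + (if j ∈ D then 1 else 0) ≤ 2 * m := by
      intro j
      by_cases hj : j ∈ D
      · obtain ⟨-, i₀, hi₀⟩ := Finset.mem_filter.1 hj
        have : (∑ i, (cells i j).card) < ∑ _i : Fin m, 2 := by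
          refine Finset.sum_lt_sum (fun i _ => hdeg i j) ⟨i₀, Finset.mem_univ _, by omega⟩
        simp only [Finset.sum_const, Finset.card_univ, Fintype.card_fin, smul_eq_mul] at this
        simp [hj]
        omega
      · simp only [hj, if_false, add_zero]
        calc (∑ i, (cells i j).card) ≤ ∑ _i : Fin m, 2 :=
              Finset.sum_le_sum fun i _ => hdeg i j
        _ = 2 * m := by simp [mul_comm]
    calc S + (t + 1) ≤ S + D.card := by omega
    _ = ∑ j : Fin n, ((∑ i, (cells i j).card) + (if j ∈ D then 1 else 0)) := by
        rw [Finset.sum_add_distrib, hS]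
        congr 1
        rw [Finset.sum_ite_mem, Finset.univ_inter, Finset.card_eq_sum_ones]
    _ ≤ ∑ _j : Fin n, 2 * m := Finset.sum_le_sum fun j _ => hcol j
    _ = 2 * m * n := by simp [mul_comm]
  have key : (n₀ * m + 1) * (t + 1) ≤ 2 * m * n := by
    calc (n₀ * m + 1) * (t + 1) = k * (t + 1) + (t + 1) := by rw [hk]; ring
    _ ≤ S + (t + 1) := by omega
    _ ≤ 2 * m * n := hup
  -- final algebra over ℚ
  have keyQ : ((n₀ : ℚ) * m + 1) * ((t : ℚ) + 1) ≤ 2 * m * n := by exact_mod_cast key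
  have hnQ : (n : ℚ) = (n₀ : ℚ) + t := by exact_mod_cast hnt.symm
  have hn₀Q : (3 : ℚ) ≤ (n₀ : ℚ) := by exact_mod_cast hn₀
  have hmQ : (1 : ℚ) ≤ (m : ℚ) := by exact_mod_cast hm
  have hD1 : (0 : ℚ) < ((n₀ : ℚ) - 2) * m + 1 := by nlinarith
  have hD2 : (0 : ℚ) < (n₀ : ℚ) - 2 := by linarith
  have hRHS : ((n₀ : ℚ) - 1) / ((n₀ : ℚ) - 2) *
      ((n₀ : ℚ) - 2 / (((n₀ : ℚ) - 2) * (m : ℚ) + 1))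
      = ((n₀ : ℚ) - 1) * ((n₀ : ℚ) * m + 1) / (((n₀ : ℚ) - 2) * m + 1) := by
    field_simp
    ring
  rw [hRHS, le_div_iff₀ hD1, hnQ]
  nlinarith [keyQ]
end

section
/- Under the hypotheses of the counting bound for degree-one-and-two array BP-XOR codes (t-erasure tolerating, k = (n-t)m information symbols, n₀ = n - t): if n₀ = 3 and m ≤ 2 then n ≤ 4; if n₀ = 3 and m ≥ 3 then n ≤ 5; and if n₀ ≥ 4 then n ≤ n₀ + 1 (i.e., t ≤ 1). -/
/-- From the counting-bound inequality n ≤ ((n₀-1)/(n₀-2))(n₀ - 2/((n₀-2)m+1)) for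
integers m ≥ 1, n₀ > 2: if n₀ = 3 and m ≤ 2 then n ≤ 4; if n₀ = 3 and m ≥ 3 then
n ≤ 5; and if n₀ ≥ 4 then n ≤ n₀ + 1. -/
theorem stmt13 (m n n₀ : ℕ) (hm : 1 ≤ m) (hn₀ : 2 < n₀)
    (hineq : (n : ℚ) ≤ ((n₀ : ℚ) - 1) / ((n₀ : ℚ) - 2) *
      ((n₀ : ℚ) - 2 / (((n₀ : ℚ) - 2) * (m : ℚ) + 1))) :
    (n₀ = 3 → m ≤ 2 → n ≤ 4) ∧ (n₀ = 3 → 3 ≤ m → n ≤ 5) ∧ (4 ≤ n₀ → n ≤ n₀ + 1) := by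
  refine ⟨?_, ?_, ?_⟩
  · rintro rfl hm2
    interval_cases m <;> push_cast at hineq <;> norm_num at hineq <;>
      first
        | omega
        | (have h5 : (n : ℚ) < 5 := by linarith
           have : n < 5 := by exact_mod_cast h5
           omega)
  · rintro rfl hm3
    push_cast at hineq
    norm_num at hineq
    have hd : (0:ℚ) < (m:ℚ) + 1 := by positivity
    have hε : (0:ℚ) < 2 / ((m:ℚ) + 1) := by positivity
    have h6 : (n : ℚ) < 6 := by linarith
    have : n < 6 := by exact_mod_cast h6
    omega
  · intro h4
    have ha : (4:ℚ) ≤ (n₀ : ℚ) := by exact_mod_cast h4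
    have ha2 : (0:ℚ) < (n₀ : ℚ) - 2 := by linarith
    have hm0 : (0:ℚ) ≤ (m : ℚ) := Nat.cast_nonneg m
    have hd : (0:ℚ) < ((n₀ : ℚ) - 2) * (m : ℚ) + 1 := by nlinarith
    have hε : (0:ℚ) < 2 / (((n₀ : ℚ) - 2) * (m : ℚ) + 1) := by positivity
    have key : ((n₀ : ℚ) - 1) / ((n₀ : ℚ) - 2) *
        ((n₀ : ℚ) - 2 / (((n₀ : ℚ) - 2) * (m : ℚ) + 1)) < (n₀ : ℚ) + 2 := by
      rw [div_mul_eq_mul_div, div_lt_iff₀ ha2]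
      nlinarith [mul_pos (show (0:ℚ) < (n₀:ℚ) - 1 by linarith) hε]
    have hn : (n : ℚ) < (n₀ : ℚ) + 2 := lt_of_le_of_lt hineq key
    have : n < n₀ + 2 := by exact_mod_cast hn
    omega
end

section
/- For every integer r ≥ 1, gluing the vertex v₁ of r copies of the edge-colored graph G_{4,1} (which has 5 vertices, 8 edges, and 4 colors and is 3-color connected) at a common vertex produces a 3-color connected edge-colored graph with 4r+1 vertices and 8r edges using 4 colors. -/
/-!
Removing any two colors from G_{4,1} leaves a graph in which every vertex is reachable from v₁;
this is a finite check, done by computing breadth-first layers. In the glued graph every vertex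
lies in some copy, hence is reachable from the shared vertex inside that copy, and by symmetry
any two vertices are joined through the shared vertex.
-/

/-- The edge list of the edge-colored graph G_{4,1} (vertices v₁,…,v₅ as 0,…,4, colors
c₁,…,c₄ as 0,…,3): color 0: (0,1),(2,3); color 1: (1,2),(0,4); color 2: (3,4),(0,2);
color 3: (1,4),(0,3). -/
def g41 : Fin 8 → (Fin 5 × Fin 5) × Fin 4 :=
  ![((0, 1), 0), ((2, 3), 0), ((1, 2), 1), ((0, 4), 1),
    ((3, 4), 2), ((0, 2), 2), ((1, 4), 3), ((0, 3), 3)]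

/-- Embedding of the vertices of the c-th copy of G_{4,1} into the glued vertex set
`Option (Fin r × Fin 4)`: vertex v₁ (= 0) is the shared vertex `none`, and vertex
v_{j+2} (= j+1) becomes `some (c, j)`. -/
def emb {r : ℕ} (c : Fin r) (v : Fin 5) : Option (Fin r × Fin 4) :=
  Fin.cases none (fun j => some (c, j)) v

open Finset Relation

section Reachability

variable {α : Type*} [DecidableEq α] [Fintype α] (R : α → α → Prop) [DecidableRel R]

def reachableWithin (a : α) : ℕ → Finset α
  | 0 => {a}
  | n + 1 => reachableWithin a n ∪ univ.filter fun y => ∃ x ∈ reachableWithin a n, R x y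

variable {R}

theorem reflTransGen_of_mem_reachableWithin {a y : α} :
    ∀ {n : ℕ}, y ∈ reachableWithin R a n → ReflTransGen R a y
  | 0, hy => by rw [reachableWithin, mem_singleton] at hy; rw [hy]
  | n + 1, hy => by
    rw [reachableWithin, mem_union, mem_filter_univ] at hy
    rcases hy with hy | ⟨x, hx, hxy⟩
    · exact reflTransGen_of_mem_reachableWithin hy
    · exact (reflTransGen_of_mem_reachableWithin hx).tail hxy

end Reachability

theorem Relation.ReflTransGen.of_hub {α : Type*} {S : α → α → Prop} [Std.Symm S] (h : α)
    (hh : ∀ w, ReflTransGen S h w) (a b : α) : ReflTransGen S a b :=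
  (Std.Symm.symm _ _ (hh a)).trans (hh b)

section EdgeColored

variable {E V C W ι : Type*} (g : E → (V × V) × C)

def avoidAdj (D : Finset C) (u v : V) : Prop :=
  ∃ e, (g e).2 ∉ D ∧ s((g e).1.1, (g e).1.2) = s(u, v)

def gluedAvoidAdj (f : ι → V → W) (D : Finset C) (x y : W) : Prop :=
  ∃ c, ∃ e, (g e).2 ∉ D ∧ s(f c (g e).1.1, f c (g e).1.2) = s(x, y)

instance [Fintype E] [DecidableEq V] [DecidableEq C] (D : Finset C) :
    DecidableRel (avoidAdj g D) := fun _ _ =>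
  inferInstanceAs (Decidable (∃ _, _))

instance (f : ι → V → W) (D : Finset C) : Std.Symm (gluedAvoidAdj g f D) where
  symm _ _ := fun ⟨c, e, he, hs⟩ => ⟨c, e, he, hs.trans Sym2.eq_swap⟩

variable {g}

theorem avoidAdj.glued {D : Finset C} {u v : V} (f : ι → V → W) (c : ι) (h : avoidAdj g D u v) :
    gluedAvoidAdj g f D (f c u) (f c v) :=
  let ⟨e, he, hs⟩ := h
  ⟨c, e, he, by simpa using congrArg (Sym2.map (f c)) hs⟩

end EdgeColored

theorem g41_three_color_connected (D : Finset (Fin 4)) (hD : D.card = 2) (v : Fin 5) :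
    ReflTransGen (avoidAdj g41 D) 0 v := by
  have : v ∈ reachableWithin (avoidAdj g41 D) 0 3 := by revert D v; decide
  exact reflTransGen_of_mem_reachableWithin this

theorem stmt15_general (r : ℕ) :
    (∀ D : Finset (Fin 4), D.card = 2 →
      ∀ a b : Option (Fin r × Fin 4),
        Relation.ReflTransGen
          (fun x y => ∃ c : Fin r, ∃ e : Fin 8, (g41 e).2 ∉ D ∧
            s(emb c (g41 e).1.1, emb c (g41 e).1.2) = s(x, y)) a b) ∧
    Nat.card (Option (Fin r × Fin 4)) = 4 * r + 1 ∧
    Nat.card (Fin r × Fin 8) = 8 * r := by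
  refine ⟨fun D hD => ?_, by simp [mul_comm], by simp [mul_comm]⟩
  refine ReflTransGen.of_hub (S := gluedAvoidAdj g41 emb D) none fun w => ?_
  rcases w with _ | ⟨c, j⟩
  · exact .refl
  · exact (g41_three_color_connected D hD j.succ).lift (emb c) fun _ _ => avoidAdj.glued emb c

/-- Gluing r ≥ 1 copies of G_{4,1} at the vertex v₁ yields a 3-color connected
edge-colored graph with 4r+1 vertices and 8r edges using 4 colors. -/
theorem stmt15 (r : ℕ) (hr : 1 ≤ r) :
    (∀ D : Finset (Fin 4), D.card = 2 →
      ∀ a b : Option (Fin r × Fin 4),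
        Relation.ReflTransGen
          (fun x y => ∃ c : Fin r, ∃ e : Fin 8, (g41 e).2 ∉ D ∧
            s(emb c (g41 e).1.1, emb c (g41 e).1.2) = s(x, y)) a b) ∧
    Nat.card (Option (Fin r × Fin 4)) = 4 * r + 1 ∧
    Nat.card (Fin r × Fin 8) = 8 * r :=
  stmt15_general r
end

section
/- Let p be an odd prime and m = (p-1)/2. Define the m×p array whose cell in row r (1 ≤ r ≤ m) and column i (0 ≤ i ≤ p-1) is v_{r+i} ⊕ v_{p-r+i} (indices mod p, with index 0 identified with p, and with v_p treated as 0 so that degree-one symbols appear). Then for any 2 columns of this array, all p-1 information symbols v₁,...,v_{p-1} can be recovered by belief propagation; i.e., this is a (p-2)-erasure tolerating (p-1)/2 × p array BP-XOR code on p-1 information symbols. -/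
/-- The zig-zag peeling sequence through the two columns. -/
def xseq (p : ℕ) (j₁ j₂ : ZMod p) : ℕ → ZMod p
  | 0 => 2 * j₂
  | k + 1 => 2 * (if Even k then j₁ else j₂) - xseq p j₁ j₂ k

lemma xseq_closed (p : ℕ) (j₁ j₂ : ZMod p) (k : ℕ) :
    xseq p j₁ j₂ (2 * k) = 2 * j₂ + 2 * (k : ZMod p) * (j₂ - j₁) := by
  induction k with
  | zero => simp [xseq]
  | succ k ih =>
    have h1 : 2 * (k + 1) = (2 * k + 1) + 1 := by ring
    rw [h1]
    have he : ¬ Even (2 * k + 1) := by simp [Nat.even_add_one]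
    have ho : Even (2 * k) := even_two_mul k
    simp only [xseq, if_pos ho, if_neg he, ih]
    push_cast
    ring

/-- For an odd prime p, the (p-1)/2 × p array whose cell in row r (1 ≤ r ≤ (p-1)/2)
and column j is v_{r+j} ⊕ v_{j-r} (indices in ℤ/p, with v_0 ≡ 0, so a cell's support
is {r+j, j-r} \ {0}) is a (p-2)-erasure tolerating array BP-XOR code: from the cells
of any two distinct columns j₁ ≠ j₂, every information symbol v_x (x ≠ 0) is
recoverable by belief propagation. -/
theorem stmt16 (p : ℕ) (hp : p.Prime) (hodd : p ≠ 2) (j₁ j₂ : ZMod p) (hj : j₁ ≠ j₂) :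
    ∀ x : ZMod p, x ≠ 0 →
      Recoverable
        {s : Finset (ZMod p) | ∃ r : ℕ, 1 ≤ r ∧ 2 * r ≤ p - 1 ∧
          ∃ j : ZMod p, (j = j₁ ∨ j = j₂) ∧
            s = ({(r : ZMod p) + j, j - (r : ZMod p)} : Finset (ZMod p)).erase 0} x := by
  haveI : Fact p.Prime := ⟨hp⟩
  set cells : Set (Finset (ZMod p)) :=
    {s : Finset (ZMod p) | ∃ r : ℕ, 1 ≤ r ∧ 2 * r ≤ p - 1 ∧
      ∃ j : ZMod p, (j = j₁ ∨ j = j₂) ∧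
        s = ({(r : ZMod p) + j, j - (r : ZMod p)} : Finset (ZMod p)).erase 0} with hcells
  have hp2 : 2 < p := lt_of_le_of_ne hp.two_le (Ne.symm hodd)
  have hpodd : Odd p := hp.odd_of_ne_two hodd
  have h2 : (2 : ZMod p) ≠ 0 := by
    intro h
    have h' : ((2 : ℕ) : ZMod p) = 0 := by exact_mod_cast h
    have hd := (ZMod.natCast_eq_zero_iff 2 p).mp h'
    have := Nat.le_of_dvd (by norm_num) hd
    omega
  -- key single-step recovery lemma
  have recov : ∀ (j a : ZMod p), (j = j₁ ∨ j = j₂) → a ≠ 0 → a ≠ j →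
      (2 * j - a = 0 ∨ Recoverable cells (2 * j - a)) → Recoverable cells a := by
    intro j a hjm ha haj hb
    have hz : a - j ≠ 0 := sub_ne_zero.mpr haj
    have hz' : j - a ≠ 0 := sub_ne_zero.mpr (Ne.symm haj)
    have hv1 : 0 < (a - j).val := ZMod.val_pos.mpr hz
    have hw1 : 0 < (j - a).val := ZMod.val_pos.mpr hz'
    have hvw : (a - j).val + (j - a).val = p := by
      have hneg : j - a = -(a - j) := by ring
      rw [hneg, ZMod.neg_val, if_neg hz]
      have := (a - j).val_lt
      omega
    have hne : (a - j).val ≠ (j - a).val := by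
      intro h
      rcases hpodd with ⟨t, ht⟩
      omega
    set r : ℕ := min (a - j).val ((j - a).val) with hr
    have hr1 : 1 ≤ r := by omega
    have hr2 : 2 * r ≤ p - 1 := by omega
    have hcast : ((r : ℕ) : ZMod p) = a - j ∨ ((r : ℕ) : ZMod p) = j - a := by
      rcases le_total ((a - j).val) ((j - a).val) with h | h
      · left
        rw [hr, min_eq_left h]
        simp [ZMod.natCast_val, ZMod.cast_id]
      · right
        rw [hr, min_eq_right h]
        simp [ZMod.natCast_val, ZMod.cast_id]
    have hs : ({a, 2 * j - a} : Finset (ZMod p)).erase 0 ∈ cells := by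
      refine ⟨r, hr1, hr2, j, hjm, ?_⟩
      rcases hcast with h | h
      · rw [h]
        congr 1
        have h1 : a - j + j = a := by ring
        have h2 : j - (a - j) = 2 * j - a := by ring
        rw [h1, h2]
      · rw [h]
        have h1 : j - a + j = 2 * j - a := by ring
        have h2 : j - (j - a) = a := by ring
        rw [h1, h2, Finset.pair_comm]
    refine Recoverable.step _ hs a ?_ ?_
    · exact Finset.mem_erase.mpr ⟨ha, Finset.mem_insert_self _ _⟩
    · intro k hk hka
      rw [Finset.mem_erase, Finset.mem_insert, Finset.mem_singleton] at hk
      rcases hk.2 with h | h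
      · exact absurd h hka
      · subst h
        rcases hb with h0 | hrec
        · exact absurd h0 hk.1
        · exact hrec
  -- every term of the sequence is zero or recoverable
  have main : ∀ k, xseq p j₁ j₂ k = 0 ∨ Recoverable cells (xseq p j₁ j₂ k) := by
    intro k
    induction k with
    | zero =>
      by_cases h0 : (2 : ZMod p) * j₂ = 0
      · left; rw [show xseq p j₁ j₂ 0 = 2 * j₂ from rfl]; exact h0
      · right
        rw [show xseq p j₁ j₂ 0 = 2 * j₂ from rfl]
        have hj2 : j₂ ≠ 0 := by
          intro h; exact h0 (by rw [h, mul_zero])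
        refine recov j₂ (2 * j₂) (Or.inr rfl) h0 ?_ ?_
        · intro h
          have : j₂ = 0 := by
            have : (2 : ZMod p) * j₂ - j₂ = 0 := by rw [h]; ring
            have h' : j₂ = 0 := by linear_combination this
            exact h'
          exact hj2 this
        · left; ring
    | succ k ih =>
      set j : ZMod p := if Even k then j₁ else j₂ with hjdef
      have hjm : j = j₁ ∨ j = j₂ := by
        by_cases h : Even k <;> simp [hjdef, h]
      have hx : xseq p j₁ j₂ (k + 1) = 2 * j - xseq p j₁ j₂ k := rfl
      by_cases h0 : xseq p j₁ j₂ (k + 1) = 0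
      · left; exact h0
      right
      by_cases hjeq : xseq p j₁ j₂ (k + 1) = j
      · have hk : xseq p j₁ j₂ k = xseq p j₁ j₂ (k + 1) := by
          rw [hx] at hjeq ⊢
          linear_combination (-2 : ZMod p) * hjeq
        rcases ih with hz | hrec
        · rw [hk] at hz; exact absurd hz h0
        · rw [hk] at hrec; exact hrec
      · refine recov j _ hjm h0 hjeq ?_
        have heq : 2 * j - xseq p j₁ j₂ (k + 1) = xseq p j₁ j₂ k := by
          rw [hx]; ring
        rw [heq]
        exact ih
  intro x hx
  have hd : (2 : ZMod p) * (j₂ - j₁) ≠ 0 :=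
    mul_ne_zero h2 (sub_ne_zero.mpr (Ne.symm hj))
  set k : ℕ := ((x - 2 * j₂) * ((2 : ZMod p) * (j₂ - j₁))⁻¹).val with hkdef
  have hk : xseq p j₁ j₂ (2 * k) = x := by
    rw [xseq_closed]
    have hkc : ((k : ℕ) : ZMod p) = (x - 2 * j₂) * ((2 : ZMod p) * (j₂ - j₁))⁻¹ := by
      rw [hkdef]; simp [ZMod.natCast_val, ZMod.cast_id]
    rw [hkc]
    field_simp
    ring
  rcases main (2 * k) with h | h
  · rw [hk] at h; exact absurd h hx
  · rw [hk] at h; exact h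
end

section
/- For n = 5 servers and k = 3 data fragments v₁, v₂, v₃, there is no assignment of one XOR-encoding symbol (a nonempty XOR-subset of {v₁,v₂,v₃}) to each server such that from every 3 of the 5 servers, all of v₁, v₂, v₃ can be recovered by the belief-propagation (peeling) decoder. In particular, BP decoding requires that at least 3 servers store degree-one symbols; these must be v₁, v₂, v₃ respectively (up to symmetry); then each v_i must appear in at least 3 servers, forcing both remaining servers to store v₁⊕v₂⊕v₃, and then erasing the servers holding v₁ and v₂ defeats BP decoding. -/
/-- Bitmask of a subset of `Fin 3`. -/
def mask (s : Finset (Fin 3)) : Nat :=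
  (if (0:Fin 3) ∈ s then 1 else 0) + (if (1:Fin 3) ∈ s then 2 else 0) +
  (if (2:Fin 3) ∈ s then 4 else 0)

/-- One peeling update: if the unknown part of cell `c` is a single bit, learn `c`. -/
def upd (c k : Nat) : Nat :=
  if c &&& (7 ^^^ k) = 1 ∨ c &&& (7 ^^^ k) = 2 ∨ c &&& (7 ^^^ k) = 4 then k ||| c else k

def stepN (a b c k : Nat) : Nat := upd a (upd b (upd c k))

/-- Iterated peeling closure for three cells given as bitmasks. -/
def closN (a b c : Nat) : Nat := stepN a b c (stepN a b c (stepN a b c 0))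

set_option maxRecDepth 10000 in
set_option maxHeartbeats 8000000 in
lemma closed3 : ∀ a b c : Finset (Fin 3), ∀ s : Finset (Fin 3),
    (s = a ∨ s = b ∨ s = c) → ∀ i ∈ s,
    (∀ j ∈ s, j ≠ i → Nat.testBit (closN (mask a) (mask b) (mask c)) j.val) →
    Nat.testBit (closN (mask a) (mask b) (mask c)) i.val := by decide

def bad (a b c : Nat) : Prop := ∃ i : Fin 3, ¬ Nat.testBit (closN a b c) i.val

instance (a b c : Nat) : Decidable (bad a b c) := by unfold bad; infer_instance

set_option maxRecDepth 100000 in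
set_option synthInstance.maxSize 10000 in
set_option synthInstance.maxHeartbeats 1000000 in
set_option maxHeartbeats 8000000 in
lemma brute : ∀ a b c d e : Finset (Fin 3),
    a.Nonempty → b.Nonempty → c.Nonempty → d.Nonempty → e.Nonempty →
    bad (mask a) (mask b) (mask c) ∨ bad (mask a) (mask b) (mask d) ∨
    bad (mask a) (mask b) (mask e) ∨ bad (mask a) (mask c) (mask d) ∨
    bad (mask a) (mask c) (mask e) ∨ bad (mask a) (mask d) (mask e) ∨
    bad (mask b) (mask c) (mask d) ∨ bad (mask b) (mask c) (mask e) ∨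
    bad (mask b) (mask d) (mask e) ∨ bad (mask c) (mask d) (mask e) := by decide

lemma rec_sound {store : Fin 5 → Finset (Fin 3)} {x y z : Fin 5} {i : Fin 3}
    (h : Recoverable {s | ∃ j ∈ ({x, y, z} : Finset (Fin 5)), s = store j} i) :
    Nat.testBit (closN (mask (store x)) (mask (store y)) (mask (store z))) i.val := by
  induction h with
  | step s hs i hi h ih =>
    obtain ⟨j, hj, rfl⟩ := hs
    have hm : store j = store x ∨ store j = store y ∨ store j = store z := by
      simp only [Finset.mem_insert, Finset.mem_singleton] at hj
      rcases hj with rfl | rfl | rfl <;> tauto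
    exact closed3 _ _ _ _ hm _ hi ih

lemma use3 (store : Fin 5 → Finset (Fin 3))
    (hrec : ∀ S : Finset (Fin 5), S.card = 3 →
      ∀ i : Fin 3, Recoverable {s | ∃ j ∈ S, s = store j} i)
    (x y z : Fin 5) (hcard : ({x, y, z} : Finset (Fin 5)).card = 3)
    (hbad : bad (mask (store x)) (mask (store y)) (mask (store z))) : False := by
  obtain ⟨i, hi⟩ := hbad
  exact hi (rec_sound (hrec {x, y, z} hcard i))

/-- For n = 5 servers and k = 3 data fragments, there is no assignment of one
XOR-encoding symbol (a nonempty subset of {v₁,v₂,v₃} giving its support) to each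
server such that from every 3 of the 5 servers all three fragments can be recovered
by the belief-propagation (peeling) decoder. -/
theorem stmt18 :
    ¬ ∃ store : Fin 5 → Finset (Fin 3),
      (∀ j, (store j).Nonempty) ∧
      ∀ S : Finset (Fin 5), S.card = 3 →
        ∀ i : Fin 3, Recoverable {s | ∃ j ∈ S, s = store j} i := by
  rintro ⟨store, hne, hrec⟩
  rcases brute (store 0) (store 1) (store 2) (store 3) (store 4)
      (hne 0) (hne 1) (hne 2) (hne 3) (hne 4) with h|h|h|h|h|h|h|h|h|h
  · exact use3 store hrec 0 1 2 (by decide) h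
  · exact use3 store hrec 0 1 3 (by decide) h
  · exact use3 store hrec 0 1 4 (by decide) h
  · exact use3 store hrec 0 2 3 (by decide) h
  · exact use3 store hrec 0 2 4 (by decide) h
  · exact use3 store hrec 0 3 4 (by decide) h
  · exact use3 store hrec 1 2 3 (by decide) h
  · exact use3 store hrec 1 2 4 (by decide) h
  · exact use3 store hrec 1 3 4 (by decide) h
  · exact use3 store hrec 2 3 4 (by decide) h
end
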